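/- Let q be an odd prime power, v ≥ 1, s odd, and t with qt ≡ t (mod 2^v). If a Type-I duadic splitting of Z/2^vZ given by ρ_{s,t}: i ↦ s(i+t) exists, then a Type-I duadic splitting of Z/2^vZ given by the translation τ_t: i ↦ i+t also exists. -/

import Mathlib

/-!
The permutation `ρ : i ↦ s (i + t)` swaps `P` and its complement while `i ↦ q i` preserves them,
so `ρ` has no fixed point and never agrees with `i ↦ q i`. Writing `t = 2 ^ ν u` with `u` odd and
`ν < v`, the equations `(1 - s) i = s t` and `(q - s) i = s t` are therefore unsolvable in
`ℤ/2^vℤ`, which forces `2 ^ (ν + 1)` to divide `1 - s` and `q - s`, hence `q - 1`. So `q` acts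
trivially modulo `2 ^ (ν + 1)`, and the set of `i` such that `u⁻¹ i mod 2 ^ (ν + 1)` lies in
`[0, 2 ^ ν)` is `q`-invariant and is sent to its complement by `i ↦ i + t`.
-/

open Function

theorem Finset.image_eq_of_forall_mem_iff {α : Type*} [DecidableEq α] {f : α → α}
    (hf : Surjective f) {P Q : Finset α} (h : ∀ i, f i ∈ Q ↔ i ∈ P) : P.image f = Q := by
  ext y
  obtain ⟨x, rfl⟩ := hf y
  rw [h, mem_image]
  exact ⟨fun ⟨z, hz, hzx⟩ => (h x).1 (hzx ▸ (h z).2 hz), fun hx => ⟨x, hx, rfl⟩⟩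

theorem Finset.apply_ne_of_image_eq_compl {α : Type*} [Fintype α] [DecidableEq α]
    {f g : α → α} {P : Finset α} (hf : Injective f) (hg : Injective g) (hfP : P.image f = P)
    (hgP : P.image g = Pᶜ) (i : α) : g i ≠ f i := by
  intro h
  have hgi := hg.mem_finset_image (s := P) (a := i)
  have hfi := hf.mem_finset_image (s := P) (a := i)
  rw [hgP, mem_compl, h] at hgi
  rw [hfP] at hfi
  exact iff_not_self (hgi.symm.trans (not_congr hfi))

theorem Int.exists_eq_two_pow_mul_odd {d : ℤ} (hd : d ≠ 0) : ∃ k m, Odd m ∧ d = 2 ^ k * m := by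
  obtain ⟨m, hdm, hm⟩ :=
    (Int.finiteMultiplicity_iff (a := 2).2 ⟨by decide, hd⟩).exists_eq_pow_mul_and_not_dvd
  exact ⟨_, m, Int.not_even_iff_odd.1 fun h => hm (even_iff_two_dvd.1 h), hdm⟩

namespace ZMod

theorem isUnit_intCast_two_pow_of_odd (v : ℕ) {c : ℤ} (hc : Odd c) :
    IsUnit (c : ZMod (2 ^ v)) := by
  have h2c : IsCoprime (2 : ℤ) c := (Prime.coprime_iff_not_dvd Int.prime_two).2
    fun h => Int.not_even_iff_odd.2 hc (even_iff_two_dvd.2 h)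
  obtain ⟨a, b, hab⟩ := h2c.pow_left (m := v)
  have h2v : (2 : ZMod (2 ^ v)) ^ v = 0 := by exact_mod_cast natCast_self (2 ^ v)
  refine .of_mul_eq_one (b : ZMod (2 ^ v)) ?_
  have := congrArg (Int.cast : ℤ → ZMod (2 ^ v)) hab
  push_cast [h2v] at this
  linear_combination this

theorem exists_eq_two_pow_mul_odd_of_intCast_ne_zero {v : ℕ} {t : ℤ}
    (ht : (t : ZMod (2 ^ v)) ≠ 0) : ∃ ν < v, ∃ u, Odd u ∧ t = 2 ^ ν * u := by
  obtain ⟨ν, u, hu, rfl⟩ := Int.exists_eq_two_pow_mul_odd (d := t) fun h => ht (by simp [h])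
  refine ⟨ν, ?_, u, hu, rfl⟩
  by_contra! h
  exact ht ((intCast_zmod_eq_zero_iff_dvd _ _).2 <| by
    exact_mod_cast dvd_mul_of_dvd_left (pow_dvd_pow 2 h) u)

theorem intCast_dvd_two_pow {v ν : ℕ} {d : ℤ} (hd : ¬ 2 ^ (ν + 1) ∣ d) :
    (d : ZMod (2 ^ v)) ∣ 2 ^ ν := by
  obtain ⟨β, c, hc, rfl⟩ :=
    Int.exists_eq_two_pow_mul_odd (d := d) fun h => hd (h ▸ dvd_zero _)
  have hβ : β ≤ ν := by
    by_contra! h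
    exact hd (dvd_mul_of_dvd_left (pow_dvd_pow 2 h) c)
  obtain ⟨w, hw⟩ := (isUnit_intCast_two_pow_of_odd v hc).exists_right_inv
  refine ⟨2 ^ (ν - β) * w, ?_⟩
  push_cast
  calc (2 : ZMod (2 ^ v)) ^ ν = 2 ^ β * 2 ^ (ν - β) * 1 := by
        rw [← pow_add, Nat.add_sub_cancel' hβ, mul_one]
    _ = _ := by rw [← hw]; ring

theorem two_pow_succ_dvd_of_forall_mul_ne {v ν : ℕ} {d a : ℤ} (ha : 2 ^ ν ∣ a)
    (h : ∀ i : ZMod (2 ^ v), (d : ZMod (2 ^ v)) * i ≠ a) : 2 ^ (ν + 1) ∣ d := by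
  by_contra hd
  obtain ⟨i, hi⟩ :=
    (intCast_dvd_two_pow hd).trans (by exact_mod_cast Int.cast_dvd_cast _ _ ha)
  exact h i hi.symm

theorem val_add_two_pow_lt_iff {ν : ℕ} (x : ZMod (2 ^ (ν + 1))) :
    (x + 2 ^ ν).val < 2 ^ ν ↔ ¬ x.val < 2 ^ ν := by
  have hx := x.val_lt
  have hν : 2 ^ ν < 2 ^ (ν + 1) := Nat.pow_lt_pow_right (by norm_num) ν.lt_succ_self
  have h2ν : ((2 : ZMod (2 ^ (ν + 1))) ^ ν).val = 2 ^ ν := by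
    rw [show (2 : ZMod (2 ^ (ν + 1))) ^ ν = ((2 ^ ν : ℕ) : ZMod _) by push_cast; rfl,
      val_natCast, Nat.mod_eq_of_lt hν]
  have hsucc : 2 ^ (ν + 1) = 2 ^ ν + 2 ^ ν := by ring
  rw [val_add, h2ν]
  by_cases h : x.val < 2 ^ ν
  · rw [Nat.mod_eq_of_lt (by omega)]; omega
  · rw [Nat.mod_eq_sub_mod (by omega), Nat.mod_eq_of_lt (by omega)]; omega

theorem exists_translation_splitting {ν v : ℕ} (hν : ν < v) {q u : ℤ}
    (hq : 2 ^ (ν + 1) ∣ q - 1) (hu : Odd u) :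
    ∃ P : Finset (ZMod (2 ^ v)),
      P.image (fun i => (q : ZMod (2 ^ v)) * i) = P ∧
      P.image (fun i => i + ((2 ^ ν * u : ℤ) : ZMod (2 ^ v))) = Pᶜ := by
  let φ := castHom (pow_dvd_pow 2 hν) (ZMod (2 ^ (ν + 1)))
  obtain ⟨w, hw⟩ := (isUnit_intCast_two_pow_of_odd (ν + 1) hu).exists_left_inv
  have hφq : φ q = 1 := by
    rw [map_intCast, ← Int.cast_one, eq_comm, intCast_eq_intCast_iff_dvd_sub]
    exact_mod_cast hq
  have hφt : w * φ (2 ^ ν * u : ℤ) = 2 ^ ν := by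
    rw [map_intCast]; push_cast; linear_combination 2 ^ ν * hw
  have hq_odd : Odd q := by
    obtain ⟨k, hk⟩ := hq
    exact ⟨2 ^ ν * k, by rw [pow_succ] at hk; linarith⟩
  have hq_unit : IsUnit (q : ZMod (2 ^ v)) := isUnit_intCast_two_pow_of_odd v hq_odd
  refine ⟨Finset.univ.filter fun i => (w * φ i).val < 2 ^ ν,
    Finset.image_eq_of_forall_mem_iff hq_unit.unit.mulLeft_bijective.surjective fun i => ?_,
    Finset.image_eq_of_forall_mem_iff (add_right_surjective _) fun i => ?_⟩
  · simp [hφq]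
  · rw [Finset.mem_compl, Finset.mem_filter, Finset.mem_filter, map_add, mul_add, hφt]
    simp only [Finset.mem_univ, true_and, val_add_two_pow_lt_iff, not_not]

end ZMod

theorem stmt14 (q : ℕ) (hodd : Odd q)
    (v : ℕ) (s t : ℤ) (hs : Odd s)
    (hsplit : ∃ P : Finset (ZMod (2 ^ v)),
        P.image (fun i => (q : ZMod (2 ^ v)) * i) = P ∧
        P.image (fun i => (s : ZMod (2 ^ v)) * (i + (t : ZMod (2 ^ v)))) = Pᶜ) :
    ∃ P : Finset (ZMod (2 ^ v)),
        P.image (fun i => (q : ZMod (2 ^ v)) * i) = P ∧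
        P.image (fun i => i + (t : ZMod (2 ^ v))) = Pᶜ := by
  obtain ⟨P, hqP, hρP⟩ := hsplit
  have hq : IsUnit (q : ZMod (2 ^ v)) := by
    exact_mod_cast ZMod.isUnit_intCast_two_pow_of_odd v (hodd.natCast (R := ℤ))
  have hρ : Injective fun i : ZMod (2 ^ v) => (s : ZMod (2 ^ v)) * (i + t) := fun _ _ h =>
    add_right_cancel ((ZMod.isUnit_intCast_two_pow_of_odd v hs).mul_right_injective h)
  have hfix : ∀ i, (s : ZMod (2 ^ v)) * (i + t) ≠ i :=
    Finset.apply_ne_of_image_eq_compl injective_id hρ P.image_id hρP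
  have hμ : ∀ i, (s : ZMod (2 ^ v)) * (i + t) ≠ q * i :=
    Finset.apply_ne_of_image_eq_compl hq.mul_right_injective hρ hqP hρP
  obtain ⟨ν, hνv, u, hu, rfl⟩ := ZMod.exists_eq_two_pow_mul_odd_of_intCast_ne_zero (v := v)
    (t := t) fun h => hfix 0 (by rw [zero_add, h, mul_zero])
  have hst : (2 : ℤ) ^ ν ∣ s * (2 ^ ν * u) := dvd_mul_of_dvd_right (dvd_mul_right _ _) _
  have h1s : 2 ^ (ν + 1) ∣ 1 - s := ZMod.two_pow_succ_dvd_of_forall_mul_ne hst fun i hi =>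
    hfix i (by push_cast at hi ⊢; linear_combination -hi)
  have hqs : 2 ^ (ν + 1) ∣ (q : ℤ) - s := ZMod.two_pow_succ_dvd_of_forall_mul_ne hst
    fun i hi => hμ i (by push_cast at hi ⊢; linear_combination -hi)
  have := ZMod.exists_translation_splitting hνv (by simpa using dvd_sub hqs h1s) hu
  push_cast at this ⊢
  exact this
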